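/- Let n ≥ 1 and let d, d' be positive divisors of n. The number of quandle endomorphisms f of the dihedral quandle Z_n^dih with f(0) = 0 and f(d mod n) = d' mod n equals d if d divides d', and equals 0 otherwise. -/

import Mathlib

/-!
A quandle endomorphism `f` of `Z_n^dih` with `f 0 = 0` is odd (reflect through `0`) and satisfies
`f (k + 2) = 2 f (k + 1) - f k` (reflect `k` through `k + 1`), so it is multiplication by
`a = f 1`; conversely every such multiplication is an endomorphism. The count is therefore the
number of solutions of `a * d = d'` in `ZMod n`. Reducing modulo `d` shows there are none unless
`d ∣ d'`. If `n = d * m` and `d' = d * e`, the solutions are exactly the fibre over `e` of the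
reduction `ZMod n → ZMod m`, a coset of its kernel, which has `n / m = d` elements.
-/

/-- A quandle endomorphism of the dihedral quandle `Z_n^dih`. -/
def IsDihedralEnd (n : ℕ) (f : ZMod n → ZMod n) : Prop :=
  ∀ x y : ZMod n, f (2 * y - x) = 2 * f y - f x

namespace IsDihedralEnd

variable {n : ℕ} {f : ZMod n → ZMod n}

theorem map_neg (hf : IsDihedralEnd n f) (h0 : f 0 = 0) (x : ZMod n) : f (-x) = -f x := by
  simpa [h0] using hf x 0

theorem map_natCast (hf : IsDihedralEnd n f) (h0 : f 0 = 0) (k : ℕ) : f k = f 1 * k := by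
  suffices ∀ k : ℕ, f k = f 1 * k ∧ f (k + 1) = f 1 * (k + 1) by exact (this k).1
  intro k
  induction k with
  | zero => simp [h0]
  | succ k ih =>
    refine ⟨by push_cast; exact ih.2, ?_⟩
    have h := hf k (k + 1)
    rw [show 2 * ((k : ZMod n) + 1) - k = (k + 1 : ℕ) + 1 by push_cast; ring, ih.1, ih.2] at h
    rw [h]; push_cast; ring

theorem map_intCast (hf : IsDihedralEnd n f) (h0 : f 0 = 0) (k : ℤ) : f k = f 1 * k := by
  obtain ⟨k, rfl | rfl⟩ := Int.eq_nat_or_neg k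
  · exact_mod_cast hf.map_natCast h0 k
  · rw [Int.cast_neg, hf.map_neg h0, Int.cast_natCast, hf.map_natCast h0, mul_neg]

theorem eq_mul_of_map_zero (hf : IsDihedralEnd n f) (h0 : f 0 = 0) (x : ZMod n) :
    f x = f 1 * x := by
  obtain ⟨k, rfl⟩ := ZMod.intCast_surjective x
  exact hf.map_intCast h0 k

end IsDihedralEnd

theorem isDihedralEnd_mul_left {n : ℕ} (a : ZMod n) : IsDihedralEnd n (a * ·) :=
  fun _ _ => by ring

def dihedralEndFixingZeroEquiv {n : ℕ} (c c' : ZMod n) :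
    {f : ZMod n → ZMod n // IsDihedralEnd n f ∧ f 0 = 0 ∧ f c = c'} ≃
      {a : ZMod n // a * c = c'} where
  toFun f := ⟨f.1 1, by rw [← f.2.1.eq_mul_of_map_zero f.2.2.1, f.2.2.2]⟩
  invFun a := ⟨(a.1 * ·), isDihedralEnd_mul_left a.1, mul_zero _, a.2⟩
  left_inv f := Subtype.ext <| funext fun x => (f.2.1.eq_mul_of_map_zero f.2.2.1 x).symm
  right_inv a := Subtype.ext (mul_one a.1)

theorem AddMonoidHom.card_ker_mul_card_of_surjective {G H : Type*} [AddGroup G] [AddGroup H]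
    {f : G →+ H} (hf : Function.Surjective f) : Nat.card f.ker * Nat.card H = Nat.card G := by
  rw [← f.ker.card_mul_index, AddSubgroup.index_ker, f.range_eq_top.mpr hf, AddSubgroup.card_top]

theorem ZMod.mul_natCast_eq_iff_castHom_eq {d m : ℕ} [NeZero (d * m)] (hd : d ≠ 0)
    (a : ZMod (d * m)) (e : ℕ) :
    a * d = (d * e : ℕ) ↔ ZMod.castHom (dvd_mul_left m d) (ZMod m) a = e := by
  rw [← ZMod.natCast_zmod_val a, map_natCast, ← Nat.cast_mul, ZMod.natCast_eq_natCast_iff,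
    ZMod.natCast_eq_natCast_iff, mul_comm a.val, Nat.ModEq.mul_left_cancel_iff' hd]

theorem ZMod.card_mul_natCast_eq {n d d' : ℕ} (hn : n ≠ 0) (hdn : d ∣ n) (hdd' : d ∣ d') :
    Nat.card {a : ZMod n // a * d = d'} = d := by
  obtain ⟨m, rfl⟩ := hdn
  obtain ⟨e, rfl⟩ := hdd'
  have : NeZero (d * m) := ⟨hn⟩
  have hd : d ≠ 0 := left_ne_zero_of_mul hn
  have hm : m ≠ 0 := right_ne_zero_of_mul hn
  set π := (ZMod.castHom (dvd_mul_left m d) (ZMod m)).toAddMonoidHom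
  have hπ : Function.Surjective π := ZMod.castHom_surjective (dvd_mul_left m d)
  have hfiber : {a : ZMod (d * m) // a * d = (d * e : ℕ)} ≃ π ⁻¹' {π e} :=
    Equiv.subtypeEquivRight fun a => by
      rw [ZMod.mul_natCast_eq_iff_castHom_eq hd, Set.mem_preimage, Set.mem_singleton_iff]
      simp [π]
  have hker := AddMonoidHom.card_ker_mul_card_of_surjective hπ
  rw [Nat.card_zmod, Nat.card_zmod] at hker
  rw [Nat.card_congr (hfiber.trans (π.fiberEquivKer e))]
  exact Nat.eq_of_mul_eq_mul_right (Nat.pos_of_ne_zero hm) hker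

theorem ZMod.dvd_of_mul_natCast_eq {n d d' : ℕ} (hdn : d ∣ n) {a : ZMod n} (h : a * d = d') :
    d ∣ d' := by
  have h' := congrArg (ZMod.castHom hdn (ZMod d)) h
  rw [map_mul, map_natCast, map_natCast, ZMod.natCast_self, mul_zero, eq_comm,
    ZMod.natCast_eq_zero_iff] at h'
  exact h'

theorem card_end_between_divisor_reps_general (n : ℕ) (hn : 1 ≤ n) (d d' : ℕ) (hdn : d ∣ n) :
    Nat.card {f : ZMod n → ZMod n // IsDihedralEnd n f ∧
        f 0 = 0 ∧ f (d : ZMod n) = (d' : ZMod n)} =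
      if d ∣ d' then d else 0 := by
  rw [Nat.card_congr (dihedralEndFixingZeroEquiv _ _)]
  split_ifs with hdd'
  · exact ZMod.card_mul_natCast_eq (by omega) hdn hdd'
  · have : IsEmpty {a : ZMod n // a * d = d'} :=
      ⟨fun a => hdd' (ZMod.dvd_of_mul_natCast_eq hdn a.2)⟩
    exact Nat.card_of_isEmpty

theorem card_end_between_divisor_reps (n : ℕ) (hn : 1 ≤ n) (d d' : ℕ)
    (hd : 0 < d) (hd' : 0 < d') (hdn : d ∣ n) (hd'n : d' ∣ n) :
    Nat.card {f : ZMod n → ZMod n // IsDihedralEnd n f ∧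
        f 0 = 0 ∧ f (d : ZMod n) = (d' : ZMod n)} =
      if d ∣ d' then d else 0 :=
  card_end_between_divisor_reps_general n hn d d' hdn
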